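/- Let f : ℝ → ℝ be continuous on [a, ∞) and let α > 0. Then for every x > a, the function x ↦ (I_a^{α+1} f)(x) = (1/Γ(α+1)) ∫_a^x (x − t)^{α} f(t) dt is differentiable at x, and its derivative equals (I_a^α f)(x) = (1/Γ(α)) ∫_a^x (x − t)^{α−1} f(t) dt. -/

import Mathlib

/-!
Fubini on the triangle `a < t ≤ s ≤ y` turns `∫_a^y (y - t)^α f(t) dt` into
`α ∫_a^y G(s) ds` with `G(s) = ∫_a^s (s - t)^(α-1) f(t) dt`, so the fundamental theorem of calculus
gives the derivative `α G(x)`, and `Γ(α + 1) = α Γ(α)` fixes the normalisation. What FTC needs is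
the continuity of `G` on `[a, ∞)`; the substitution `t = s - (s - a) u` writes `G(s)` as
`(s - a)^α ∫_0^1 u^(α-1) f(s - (s - a) u) du`, a parametric integral with a fixed integrable
weight and a jointly continuous integrand. Replacing `f` by `t ↦ f (max t a)` makes `f`
continuous on all of `ℝ` without changing any of the integrals.
-/

open Real MeasureTheory Set intervalIntegral Filter Topology

theorem continuous_intervalIntegral_mul_of_continuous {X : Type*} [TopologicalSpace X]
    [FirstCountableTopology X] [LocallyCompactSpace X] {φ : ℝ → ℝ} {g : X → ℝ → ℝ} {c d : ℝ}
    (hφ : IntervalIntegrable φ volume c d) (hg : Continuous g.uncurry) :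
    Continuous fun x => ∫ s in c..d, φ s * g x s := by
  refine continuous_iff_continuousAt.2 fun x₀ => ?_
  obtain ⟨U, hU, hU_nhds⟩ := exists_compact_mem_nhds x₀
  obtain ⟨M, hM⟩ := (hU.prod isCompact_uIcc).exists_bound_of_continuousOn hg.continuousOn
  refine continuousAt_of_dominated_interval (bound := fun s => ‖φ s‖ * M) ?_ ?_ ?_ ?_
  · exact Eventually.of_forall fun x =>
      ((intervalIntegrable_iff.1 hφ).aestronglyMeasurable).mul
        (hg.comp (Continuous.prodMk_right x)).aestronglyMeasurable
  · filter_upwards [hU_nhds] with x hx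
    refine Eventually.of_forall fun s hs => ?_
    rw [norm_mul]
    exact mul_le_mul_of_nonneg_left (hM (x, s) ⟨hx, uIoc_subset_uIcc hs⟩) (norm_nonneg _)
  · exact hφ.norm.mul_const M
  · exact Eventually.of_forall fun s _ =>
      (continuous_const.mul (hg.comp (Continuous.prodMk_left s))).continuousAt

theorem intervalIntegrable_sub_rpow_mul {f : ℝ → ℝ} {r : ℝ} (hr : -1 < r) {y c d : ℝ}
    (hf : ContinuousOn f (uIcc c d)) :
    IntervalIntegrable (fun t => (y - t) ^ r * f t) volume c d := by
  have h := (intervalIntegrable_rpow' (a := y - c) (b := y - d) hr).comp_sub_left y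
  simp only [sub_sub_cancel] at h
  exact h.mul_continuousOn hf

theorem integral_sub_rpow_mul_eq_rpow_mul_integral {f : ℝ → ℝ} {α : ℝ} (hα : 0 < α) {a y : ℝ}
    (hay : a ≤ y) :
    ∫ t in a..y, (y - t) ^ (α - 1) * f t =
      (y - a) ^ α * ∫ s in (0 : ℝ)..1, s ^ (α - 1) * f (y - (y - a) * s) := by
  have hc : 0 ≤ y - a := sub_nonneg.2 hay
  have hscale := smul_integral_comp_mul_left (fun u => u ^ (α - 1) * f (y - u)) (y - a)
    (a := 0) (b := 1)
  have hsub := integral_comp_sub_left (fun u => u ^ (α - 1) * f (y - u)) y (a := a) (b := y)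
  simp only [sub_sub_cancel, sub_self, mul_zero, mul_one, smul_eq_mul] at hscale hsub
  have hpow : (y - a) ^ α = (y - a) * (y - a) ^ (α - 1) := by
    rw [mul_comm, ← rpow_add_one' hc (by simpa using hα.ne'), sub_add_cancel]
  rw [hsub, ← hscale, hpow, mul_assoc]
  congr 1
  rw [← intervalIntegral.integral_const_mul]
  refine intervalIntegral.integral_congr fun s hs => ?_
  have hs0 : 0 ≤ s := by rw [uIcc_of_le zero_le_one] at hs; exact hs.1
  simp only [mul_rpow hc hs0]
  ring

theorem continuousOn_integral_sub_rpow_mul {f : ℝ → ℝ} (hf : Continuous f) {α : ℝ} (hα : 0 < α)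
    (a : ℝ) : ContinuousOn (fun y => ∫ t in a..y, (y - t) ^ (α - 1) * f t) (Ici a) := by
  have hH : Continuous fun y => ∫ s in (0 : ℝ)..1, s ^ (α - 1) * f (y - (y - a) * s) :=
    continuous_intervalIntegral_mul_of_continuous (intervalIntegrable_rpow' (by linarith))
      (g := fun y s => f (y - (y - a) * s)) (by fun_prop)
  have hpow : Continuous fun y => (y - a) ^ α :=
    (continuous_id.sub continuous_const).rpow_const fun _ => Or.inr hα.le
  exact (hpow.mul hH).continuousOn.congr fun y hy =>
    integral_sub_rpow_mul_eq_rpow_mul_integral hα hy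

section Indicator

variable {E : Type*} [NormedAddCommGroup E] [NormedSpace ℝ E]

theorem setIntegral_Ioc_indicator_Iic {g : ℝ → E} {a b s : ℝ} (hs : s ∈ Ioc a b) :
    ∫ t in Ioc a b, (Iic s).indicator g t = ∫ t in a..s, g t := by
  rw [setIntegral_indicator measurableSet_Iic, Ioc_inter_Iic, min_eq_right hs.2,
    integral_of_le hs.1.le]

theorem setIntegral_Ioc_indicator_Ici {g : ℝ → E} {a b t : ℝ} (ht : t ∈ Ioc a b) :
    ∫ s in Ioc a b, (Ici t).indicator g s = ∫ s in t..b, g s := by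
  have hIcc : Ioc a b ∩ Ici t = Icc t b := by
    ext s
    simp only [mem_inter_iff, mem_Ioc, mem_Ici, mem_Icc]
    exact ⟨fun h => ⟨h.2, h.1.2⟩, fun h => ⟨⟨ht.1.trans_le h.1, h.2⟩, h.1⟩⟩
  rw [setIntegral_indicator measurableSet_Ici, hIcc, integral_Icc_eq_integral_Ioc,
    integral_of_le ht.2]

end Indicator

theorem integral_sub_rpow_sub_one {α : ℝ} (hα : 0 < α) (t b : ℝ) :
    ∫ s in t..b, (s - t) ^ (α - 1) = (b - t) ^ α / α := by
  rw [integral_comp_sub_right (fun u => u ^ (α - 1)), integral_rpow (Or.inl (by linarith)),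
    sub_add_cancel, sub_self, zero_rpow hα.ne', sub_zero]

theorem integral_sub_rpow_mul_eq_integral_integral {f : ℝ → ℝ} (hf : Continuous f) {α : ℝ}
    (hα : 0 < α) {a b : ℝ} (hab : a ≤ b) :
    ∫ t in a..b, (b - t) ^ α * f t =
      α * ∫ s in a..b, ∫ t in a..s, (s - t) ^ (α - 1) * f t := by
  set μ := volume.restrict (Ioc a b)
  set k : ℝ × ℝ → ℝ := {p | p.2 ≤ p.1}.indicator fun p => (p.1 - p.2) ^ (α - 1) * f p.2
  have hk_meas : Measurable k := by
    refine Measurable.indicator ?_ (measurableSet_le measurable_snd measurable_fst)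
    fun_prop
  have hk_row (s : ℝ) :
      (fun t => k (s, t)) = (Iic s).indicator fun t => (s - t) ^ (α - 1) * f t :=
    rfl
  have hk_integral_row {s : ℝ} (hs : s ∈ Ioc a b) :
      ∫ t, k (s, t) ∂μ = ∫ t in a..s, (s - t) ^ (α - 1) * f t :=
    setIntegral_Ioc_indicator_Iic hs
  have hk_integral_col {t : ℝ} (ht : t ∈ Ioc a b) :
      ∫ s, k (s, t) ∂μ = (b - t) ^ α / α * f t := by
    rw [← integral_sub_rpow_sub_one hα, ← intervalIntegral.integral_mul_const]
    exact setIntegral_Ioc_indicator_Ici ht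
  have hk_integral_norm_row {s : ℝ} (hs : s ∈ Ioc a b) :
      ∫ t, ‖k (s, t)‖ ∂μ = ∫ t in a..s, (s - t) ^ (α - 1) * |f t| := by
    simp_rw [← Real.norm_eq_abs]
    calc ∫ t, ‖k (s, t)‖ ∂μ
        = ∫ t in Ioc a b, (Iic s).indicator (fun t => ‖(s - t) ^ (α - 1) * f t‖) t := by
          congr 1 with t
          exact norm_indicator_eq_indicator_norm (s := Iic s)
            (f := fun t => (s - t) ^ (α - 1) * f t) t
      _ = ∫ t in a..s, ‖(s - t) ^ (α - 1) * f t‖ := setIntegral_Ioc_indicator_Iic hs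
      _ = ∫ t in a..s, (s - t) ^ (α - 1) * ‖f t‖ := by
          refine intervalIntegral.integral_congr fun t ht => ?_
          rw [uIcc_of_le hs.1.le] at ht
          rw [norm_mul, norm_of_nonneg (rpow_nonneg (sub_nonneg.2 ht.2) _)]
  have hk_int : Integrable k (μ.prod μ) := by
    refine (integrable_prod_iff hk_meas.aestronglyMeasurable).2 ⟨?_, ?_⟩
    · filter_upwards [ae_restrict_mem measurableSet_Ioc] with s hs
      rw [hk_row, integrable_indicator_iff measurableSet_Iic, IntegrableOn,
        Measure.restrict_restrict measurableSet_Iic, inter_comm, Ioc_inter_Iic,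
        min_eq_right hs.2]
      exact (intervalIntegrable_sub_rpow_mul (by linarith) hf.continuousOn).1
    · have hG := (continuousOn_integral_sub_rpow_mul hf.abs hα a).mono
        (Icc_subset_Ici_self : Icc a b ⊆ Ici a)
      refine (hG.integrableOn_Icc.mono_set Ioc_subset_Icc_self).congr ?_
      filter_upwards [ae_restrict_mem measurableSet_Ioc] with s hs
      exact (hk_integral_norm_row hs).symm
  have hL : ∫ s, ∫ t, k (s, t) ∂μ ∂μ = ∫ s in a..b, ∫ t in a..s, (s - t) ^ (α - 1) * f t := by
    rw [integral_of_le hab]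
    refine integral_congr_ae ?_
    filter_upwards [ae_restrict_mem measurableSet_Ioc] with s hs
    exact hk_integral_row hs
  have hR : ∫ t, ∫ s, k (s, t) ∂μ ∂μ = ∫ t in Ioc a b, (b - t) ^ α / α * f t := by
    refine integral_congr_ae ?_
    filter_upwards [ae_restrict_mem measurableSet_Ioc] with t ht
    exact hk_integral_col ht
  rw [← hL, integral_integral_swap (f := fun s t => k (s, t)) hk_int, hR, integral_of_le hab,
    ← MeasureTheory.integral_const_mul]
  congr 1 with t
  field_simp

theorem hasDerivAt_integral_sub_rpow_mul {f : ℝ → ℝ} (hf : Continuous f) {α : ℝ} (hα : 0 < α)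
    {a x : ℝ} (hax : a < x) :
    HasDerivAt (fun y => ∫ t in a..y, (y - t) ^ α * f t)
      (α * ∫ t in a..x, (x - t) ^ (α - 1) * f t) x := by
  set G := fun s => ∫ t in a..s, (s - t) ^ (α - 1) * f t
  have hG : ContinuousOn G (Ici a) := continuousOn_integral_sub_rpow_mul hf hα a
  have hG_int : IntervalIntegrable G volume a x :=
    (hG.mono (uIcc_of_le hax.le ▸ Icc_subset_Ici_self)).intervalIntegrable
  have hG_meas : StronglyMeasurableAtFilter G (𝓝 x) :=
    (hG.mono Ioi_subset_Ici_self).stronglyMeasurableAtFilter isOpen_Ioi x hax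
  have hFTC : HasDerivAt (fun y => ∫ s in a..y, G s) (G x) x :=
    integral_hasDerivAt_right hG_int hG_meas (hG.continuousAt (Ici_mem_nhds hax))
  refine (hFTC.const_mul α).congr_of_eventuallyEq ?_
  filter_upwards [Ioi_mem_nhds hax] with y hy
  exact integral_sub_rpow_mul_eq_integral_integral hf hα hy.le

/-- For `f` continuous on `[a, ∞)` and `α > 0`, the function
`x ↦ (I_a^{α+1} f)(x) = (1/Γ(α+1)) ∫_a^x (x − t)^α f(t) dt` is differentiable at every
`x > a` and its derivative equals `(I_a^α f)(x) = (1/Γ(α)) ∫_a^x (x − t)^{α−1} f(t) dt`. -/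
theorem riemann_liouville_integral_deriv
    (a : ℝ) (f : ℝ → ℝ) (hf : ContinuousOn f (Set.Ici a))
    (α : ℝ) (hα : 0 < α) :
    ∀ x : ℝ, a < x →
      HasDerivAt (fun y => (1 / Real.Gamma (α + 1)) * ∫ t in a..y, (y - t) ^ α * f t)
        ((1 / Real.Gamma α) * ∫ t in a..x, (x - t) ^ (α - 1) * f t) x := by
  intro x hax
  set g : ℝ → ℝ := fun t => f (max t a)
  have hg : Continuous g :=
    hf.comp_continuous (continuous_id.max continuous_const) fun t => le_max_right t a
  have hgf {y : ℝ} (hy : a ≤ y) (r : ℝ) :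
      ∫ t in a..y, (y - t) ^ r * g t = ∫ t in a..y, (y - t) ^ r * f t := by
    refine intervalIntegral.integral_congr fun t ht => ?_
    rw [uIcc_of_le hy] at ht
    simp only [g, max_eq_left ht.1]
  have hderiv := (hasDerivAt_integral_sub_rpow_mul hg hα hax).const_mul (1 / Gamma (α + 1))
  have hΓ : 1 / Gamma (α + 1) * α = 1 / Gamma α := by
    rw [Gamma_add_one hα.ne']
    field_simp
  rw [hgf hax.le, ← mul_assoc, hΓ] at hderiv
  refine hderiv.congr_of_eventuallyEq ?_
  filter_upwards [Ioi_mem_nhds hax] with y hy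
  rw [hgf hy.le]
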